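/- Let U be a finite set of pairwise distinct unit vectors in ℝ² with pos(U) = ℝ². If u_i ∈ U_□ and u_j = −u_i ∈ U, then every cone-volume vector γ ∈ C_cv(U) satisfies γ_i + (1/2)γ_j ≤ 1/2. -/

import Mathlib

open MeasureTheory

noncomputable section

abbrev V2 : Type := EuclideanSpace ℝ (Fin 2)

/-- The positive hull: all nonnegative linear combinations of elements of `M`. -/
def pos {E : Type*} [AddCommMonoid E] [Module ℝ E] (M : Set E) : Set E :=
  {x | ∃ (s : Finset E) (c : E → ℝ),
    (↑s : Set E) ⊆ M ∧ (∀ v, 0 ≤ c v) ∧ x = ∑ v ∈ s, c v • v}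

/-- The polyhedron `P(U,b) = {x : ⟨uᵢ,x⟩ ≤ bᵢ for all i}`. -/
def polyP {m : ℕ} (u : Fin m → V2) (b : Fin m → ℝ) : Set V2 :=
  {x | ∀ i, (inner ℝ (u i) x : ℝ) ≤ b i}

/-- The face of `P(U,b)` with outer normal `uᵢ`. -/
def faceF {m : ℕ} (u : Fin m → V2) (b : Fin m → ℝ) (i : Fin m) : Set V2 :=
  {x ∈ polyP u b | (inner ℝ (u i) x : ℝ) = b i}

/-- The cone-volume vector of `P(U,b)`: entry `i` is the area of `conv({0} ∪ Fᵢ(b))`. -/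
def cv {m : ℕ} (u : Fin m → V2) (b : Fin m → ℝ) : Fin m → ℝ :=
  fun i => (volume (convexHull ℝ (insert 0 (faceF u b i)))).toReal

/-- The cone-volume set `C_cv(U)`. -/
def Ccv {m : ℕ} (u : Fin m → V2) : Set (Fin m → ℝ) :=
  {g | ∃ b : Fin m → ℝ, (∀ i, 0 ≤ b i) ∧
    (volume (polyP u b)).toReal = 1 ∧ g = cv u b}

/-- The subspace concentration polytope
`P_scc(U) = conv{ (1/2)(eᵢ+eⱼ) : uᵢ, uⱼ linearly independent }`. -/
def Pscc {m : ℕ} (u : Fin m → V2) : Set (Fin m → ℝ) :=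
  convexHull ℝ
    {x | ∃ i j, LinearIndependent ℝ ![u i, u j] ∧
      x = (1 / 2 : ℝ) • (Pi.single i 1 + Pi.single j 1)}

/-- Indices `i` with `uᵢ ∈ U_Δ`: some triple containing `uᵢ` positively spans `ℝ²`. -/
def DeltaIdx {m : ℕ} (u : Fin m → V2) : Set (Fin m) :=
  {i | ∃ j k, pos {u i, u j, u k} = Set.univ}

/-- Indices `i` with `uᵢ ∈ U_□`. -/
def SqIdx {m : ℕ} (u : Fin m → V2) : Set (Fin m) :=
  {i | ¬ ∃ j k, pos {u i, u j, u k} = Set.univ}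

/-- Indices `k` with `u_k ∈ U_{□,uᵢ}`: `u_k` together with some `u_l` completes
`{uᵢ, -uᵢ}` to a positively spanning quadruple. -/
def SqAdj {m : ℕ} (u : Fin m → V2) (i : Fin m) : Set (Fin m) :=
  {k | ∃ l, pos {u i, -u i, u k, u l} = Set.univ}

/-!
Write `n = uᵢ`. Since `uᵢ ∈ U_□`, whenever `u_k` and `u_l` lie strictly on opposite sides of the
line `ℝ n` (with `cross n u_k > 0 > cross n u_l`) we have `cross u_k u_l ≤ 0`: otherwise
`{n, u_k, u_l}` would positively span `ℝ²`. This is exactly the compatibility condition for a shear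
parameter `s` such that, in the area-preserving coordinates `t = ⟪n, x⟫`, `z = cross n x - s t`,
every facet inequality `⟪u_k, x⟫ ≤ b_k` either has a nonnegative `t`-coefficient or does not depend
on `z`. Hence the box `(0, bᵢ] × I`, where `I` is the `z`-projection of the face `Fᵢ`, lies in
`P ∩ {t > 0}`, while the cone over `Fᵢ` lies in a triangle of area `bᵢ |I| / 2`. The cone over `Fⱼ`
lies in `P ∩ {t ≤ 0}`, so `2 γᵢ + γⱼ ≤ area P = 1`.
-/

open Set RealInnerProductSpace

section PositiveHull

variable {E : Type*} [AddCommGroup E] [Module ℝ E]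

theorem sum_smul_mem_pos {ι : Type*} {M : Set E} (t : Finset ι) (f : ι → E) (a : ι → ℝ)
    (hf : ∀ k ∈ t, f k ∈ M) (ha : ∀ k ∈ t, 0 ≤ a k) : ∑ k ∈ t, a k • f k ∈ pos M := by
  classical
  refine ⟨t.image f, fun y => ∑ k ∈ t with f k = y, a k, ?_,
    fun y => Finset.sum_nonneg fun k hk => ha k (Finset.mem_filter.1 hk).1, ?_⟩
  · simpa [Set.subset_def] using hf
  · rw [← Finset.sum_fiberwise_of_maps_to fun k hk => Finset.mem_image_of_mem f hk]
    refine Finset.sum_congr rfl fun y _ => ?_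
    rw [Finset.sum_smul]
    exact Finset.sum_congr rfl fun k hk => by rw [(Finset.mem_filter.1 hk).2]

theorem smul_add_smul_add_smul_mem_pos {v w z : E} {a b c : ℝ} (ha : 0 ≤ a) (hb : 0 ≤ b)
    (hc : 0 ≤ c) : a • v + b • w + c • z ∈ pos {v, w, z} := by
  simpa [Fin.sum_univ_three] using
    sum_smul_mem_pos Finset.univ ![v, w, z] ![a, b, c] (by intro k; fin_cases k <;> simp)
      (by intro k; fin_cases k <;> simpa)

theorem pos_eq_univ_of_smul_add_smul_add_smul_eq_zero {v w z : E}
    (hspan : ∀ x, ∃ q r : ℝ, x = q • w + r • z) {a b c : ℝ} (ha : 0 ≤ a) (hb : 0 < b)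
    (hc : 0 < c) (hrel : a • v + b • w + c • z = 0) : pos {v, w, z} = univ := by
  refine eq_univ_of_forall fun x => ?_
  obtain ⟨q, r, rfl⟩ := hspan x
  set C := max (|q| / b) (|r| / c)
  have hqC : |q| ≤ C * b := (div_le_iff₀ hb).1 (le_max_left _ _)
  have hrC : |r| ≤ C * c := (div_le_iff₀ hc).1 (le_max_right _ _)
  have hC : 0 ≤ C := (div_nonneg (abs_nonneg q) hb.le).trans (le_max_left _ _)
  have hx : q • w + r • z = (C * a) • v + (q + C * b) • w + (r + C * c) • z := by
    calc q • w + r • z = q • w + r • z + C • (a • v + b • w + c • z) := by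
          rw [hrel, smul_zero, add_zero]
      _ = (C * a) • v + (q + C * b) • w + (r + C * c) • z := by module
  rw [hx]
  exact smul_add_smul_add_smul_mem_pos (mul_nonneg hC ha) (by linarith [neg_abs_le q])
    (by linarith [neg_abs_le r])

end PositiveHull

def cross (v w : V2) : ℝ := v 0 * w 1 - v 1 * w 0

theorem inner_V2 (x y : V2) : ⟪x, y⟫ = x 0 * y 0 + x 1 * y 1 := by
  simp [PiLp.inner_apply, Fin.sum_univ_two, mul_comm]

theorem ext_V2 {x y : V2} (h₀ : x 0 = y 0) (h₁ : x 1 = y 1) : x = y := by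
  ext k
  fin_cases k <;> assumption

theorem pos_eq_univ_of_cross_pos {n v w : V2} (hv : 0 < cross n v) (hw : cross n w < 0)
    (hvw : 0 < cross v w) : pos {n, v, w} = univ := by
  refine pos_eq_univ_of_smul_add_smul_add_smul_eq_zero (b := cross w n)
    (fun x => ⟨cross x w / cross v w, cross v x / cross v w, ?_⟩) hvw.le
    (by simp only [cross] at hw ⊢; linarith) hv ?_
  · have hcramer : cross v w • x = cross x w • v + cross v x • w :=
      ext_V2 (by simp [cross]; ring) (by simp [cross]; ring)
    rw [div_eq_inv_mul, div_eq_inv_mul, mul_smul, mul_smul, ← smul_add, ← hcramer,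
      inv_smul_smul₀ hvw.ne']
  · refine ext_V2 ?_ ?_ <;> simp [cross] <;> ring

theorem cross_nonpos_of_mem_SqIdx {m : ℕ} {u : Fin m → V2} {i k l : Fin m} (hi : i ∈ SqIdx u)
    (hk : 0 < cross (u i) (u k)) (hl : cross (u i) (u l) < 0) : cross (u k) (u l) ≤ 0 :=
  not_lt.1 fun h => hi ⟨k, l, pos_eq_univ_of_cross_pos hk hl h⟩

theorem exists_add_mul_nonneg {ι : Type*} [Fintype ι] (α β : ι → ℝ)
    (h : ∀ k l, 0 < β k → β l < 0 → α k * β l - β k * α l ≤ 0) :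
    ∃ s, ∀ k, β k ≠ 0 → 0 ≤ α k + s * β k := by
  classical
  obtain ⟨s, hup, hdown⟩ : ∃ s, (∀ k, 0 < β k → -α k / β k ≤ s) ∧
      (∀ l, β l < 0 → s ≤ -α l / β l) := by
    by_cases hpos : ∃ k, 0 < β k
    · obtain ⟨k₀, hk₀⟩ := hpos
      set S := Finset.univ.filter fun k => 0 < β k
      refine ⟨S.sup' ⟨k₀, by simpa [S]⟩ fun k => -α k / β k,
        fun k hk => Finset.le_sup' (fun k => -α k / β k) (by simpa [S]),
        fun l hl => Finset.sup'_le _ _ fun k hk => ?_⟩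
      have hk : 0 < β k := by simpa [S] using hk
      have hdiff : -α l / β l - -α k / β k = (α k * β l - β k * α l) / (β k * β l) := by
        field_simp [hk.ne', hl.ne]
        ring
      linarith [div_nonneg_of_nonpos (h k l hk hl) (mul_neg_of_pos_of_neg hk hl).le]
    · simp only [not_exists, not_lt] at hpos
      obtain ⟨s, hs⟩ := (Finset.univ.image fun l => -α l / β l).bddBelow
      exact ⟨s, fun k hk => absurd hk (not_lt.2 (hpos k)),
        fun l _ => hs (Finset.mem_image_of_mem _ (Finset.mem_univ l))⟩
  refine ⟨s, fun k hk => ?_⟩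
  rcases hk.lt_or_gt with hk | hk
  · have := (le_div_iff_of_neg hk).1 (hdown k hk)
    linarith
  · have := (div_le_iff₀ hk).1 (hup k hk)
    linarith

theorem Set.OrdConnected.exists_subset_Icc {S : Set ℝ} (hS : S.OrdConnected)
    (hfin : volume S ≠ ⊤) :
    ∃ c d, c ≤ d ∧ S ⊆ Icc c d ∧ ENNReal.ofReal (d - c) ≤ volume S := by
  rcases S.eq_empty_or_nonempty with rfl | ⟨y, hy⟩
  · exact ⟨0, 0, le_rfl, empty_subset _, by simp⟩
  have hbdd : Bornology.IsBounded S := by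
    refine (Metric.isBounded_closedBall (x := y) (r := (volume S).toReal)).subset fun x hx => ?_
    rw [Metric.mem_closedBall, Real.dist_eq, ← ENNReal.ofReal_le_iff_le_toReal hfin,
      ← Real.volume_interval]
    exact measure_mono (hS.uIcc_subset hy hx)
  refine ⟨sInf S, sSup S, csInf_le_csSup ⟨y, hy⟩ hbdd.bddBelow hbdd.bddAbove,
    hbdd.subset_Icc_sInf_sSup, ?_⟩
  rw [← Real.volume_Ioo]
  exact measure_mono (IsConnected.Ioo_csInf_csSup_subset ⟨⟨y, hy⟩, hS.isPreconnected⟩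
    hbdd.bddBelow hbdd.bddAbove)

def planeMap (a b c d : ℝ) : ℝ × ℝ →ₗ[ℝ] ℝ × ℝ :=
  Matrix.toLin (Module.Basis.finTwoProd ℝ) (Module.Basis.finTwoProd ℝ) !![a, b; c, d]

@[simp]
theorem planeMap_apply (a b c d : ℝ) (p : ℝ × ℝ) :
    planeMap a b c d p = (a * p.1 + b * p.2, c * p.1 + d * p.2) :=
  Matrix.toLin_finTwoProd_apply _ _ _ _ _

theorem det_planeMap (a b c d : ℝ) : LinearMap.det (planeMap a b c d) = a * d - b * c := by
  rw [planeMap, LinearMap.det_toLin, Matrix.det_fin_two_of]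

theorem measurePreserving_planeMap {a b c d : ℝ} (h : a * d - b * c = 1) :
    MeasurePreserving (planeMap a b c d) := by
  refine ⟨(planeMap a b c d).continuous_of_finiteDimensional.measurable, ?_⟩
  rw [Measure.map_linearMap_addHaar_eq_smul_addHaar _ (by rw [det_planeMap, h]; exact one_ne_zero),
    det_planeMap, h]
  simp

theorem two_mul_volume_stdTriangle_le :
    2 * volume (convexHull ℝ {(0 : ℝ × ℝ), (1, 0), (0, 1)}) ≤ 1 := by
  set D := {p : ℝ × ℝ | 0 ≤ p.1 ∧ 0 ≤ p.2 ∧ p.1 + p.2 ≤ 1}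
  have hD : MeasurableSet D :=
    (measurableSet_le measurable_const measurable_fst).inter
      ((measurableSet_le measurable_const measurable_snd).inter
        (measurableSet_le (measurable_fst.add measurable_snd) measurable_const))
  have hconv : Convex ℝ D := by
    rintro p ⟨hp₁, hp₂, hp₃⟩ q ⟨hq₁, hq₂, hq₃⟩ a b ha hb hab
    simp only [D, mem_ofPred_eq, Prod.fst_add, Prod.snd_add, Prod.smul_fst, Prod.smul_snd,
      smul_eq_mul]
    refine ⟨by positivity, by positivity, ?_⟩
    nlinarith
  have hΔ : convexHull ℝ {(0 : ℝ × ℝ), (1, 0), (0, 1)} ⊆ D :=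
    convexHull_min (by rintro p (rfl | rfl | rfl) <;> norm_num [D]) hconv
  -- `D` and its point reflection through `(1/2, 1/2)` tile the unit square
  have hρ := Measure.measurePreserving_sub_left (volume : Measure (ℝ × ℝ)) (1, 1)
  set D' := (fun p => (1, 1) - p) ⁻¹' D
  have hunion : D ∪ D' ⊆ Icc 0 1 ×ˢ Icc 0 1 := by
    rintro p (⟨h₁, h₂, h₃⟩ | ⟨h₁, h₂, h₃⟩)
    · exact ⟨⟨h₁, by linarith⟩, h₂, by linarith⟩
    · simp only [Prod.fst_sub, Prod.snd_sub] at h₁ h₂ h₃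
      exact ⟨⟨by linarith, by linarith⟩, by linarith, by linarith⟩
  have hinter : D ∩ D' ⊆ {p | p.1 + p.2 = 1} := by
    rintro p ⟨⟨-, -, h₁⟩, -, -, h₂⟩
    simp only [Prod.fst_sub, Prod.snd_sub] at h₂
    exact le_antisymm h₁ (by linarith)
  have hline : volume {p : ℝ × ℝ | p.1 + p.2 = 1} = 0 := by
    have hshear := measurePreserving_prod_add (volume : Measure ℝ) (volume : Measure ℝ)
    have : {p : ℝ × ℝ | p.1 + p.2 = 1} = (fun z : ℝ × ℝ => (z.1, z.1 + z.2)) ⁻¹' (univ ×ˢ {1}) := by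
      ext; simp
    rw [this, Measure.volume_eq_prod, hshear.measure_preimage
      (MeasurableSet.univ.prod (measurableSet_singleton 1)).nullMeasurableSet, Measure.prod_prod]
    simp
  calc 2 * volume (convexHull ℝ {(0 : ℝ × ℝ), (1, 0), (0, 1)}) ≤ volume D + volume D' := by
        rw [two_mul, hρ.measure_preimage hD.nullMeasurableSet]
        gcongr
    _ = volume (D ∪ D') + volume (D ∩ D') := (measure_union_add_inter _ (hρ.measurable hD)).symm
    _ ≤ volume (Icc (0 : ℝ) 1 ×ˢ Icc (0 : ℝ) 1) + 0 :=
        add_le_add (measure_mono hunion) (measure_mono_null hinter hline).le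
    _ = 1 := by rw [Measure.volume_eq_prod, Measure.prod_prod]; simp

theorem two_mul_volume_triangle_le (β c d : ℝ) :
    2 * volume (convexHull ℝ {(0 : ℝ × ℝ), (β, c), (β, d)}) ≤ ENNReal.ofReal |β * d - β * c| := by
  have himage : convexHull ℝ {(0 : ℝ × ℝ), (β, c), (β, d)} =
      planeMap β β c d '' convexHull ℝ {0, (1, 0), (0, 1)} := by
    rw [LinearMap.image_convexHull, image_insert_eq, image_insert_eq, image_singleton, map_zero]
    simp
  rw [himage, Measure.addHaar_image_linearMap, det_planeMap, mul_left_comm]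
  calc _ ≤ ENNReal.ofReal |β * d - β * c| * 1 := by gcongr; exact two_mul_volume_stdTriangle_le
    _ = _ := mul_one _

theorem cross_eq_inner_mul_cross_sub (n : V2) (hn : n 0 ^ 2 + n 1 ^ 2 = 1) (v w : V2) :
    cross v w = ⟪n, v⟫ * cross n w - cross n v * ⟪n, w⟫ := by
  simp only [inner_V2, cross]
  linear_combination -(v 0 * w 1 - v 1 * w 0) * hn

def shearCoord (n : V2) (s : ℝ) : V2 →ₗ[ℝ] ℝ × ℝ where
  toFun x := (⟪n, x⟫, cross n x - s * ⟪n, x⟫)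
  map_add' x y := by
    simp only [inner_add_right, cross, PiLp.add_apply, Prod.mk_add_mk]
    congr 1
    ring
  map_smul' c x := by
    simp only [real_inner_smul_right, cross, PiLp.smul_apply, smul_eq_mul, RingHom.id_apply,
      Prod.smul_mk]
    congr 1
    ring

@[simp]
theorem shearCoord_apply (n : V2) (s : ℝ) (x : V2) :
    shearCoord n s x = (⟪n, x⟫, cross n x - s * ⟪n, x⟫) := rfl

theorem shearCoord_fst (n : V2) (s : ℝ) (x : V2) : (shearCoord n s x).1 = ⟪n, x⟫ := rfl

theorem measurePreserving_shearCoord {n : V2} (hn : n 0 ^ 2 + n 1 ^ 2 = 1) (s : ℝ) :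
    MeasurePreserving (shearCoord n s) := by
  have hcoords : MeasurePreserving (fun x : V2 => (x 0, x 1)) :=
    (volume_preserving_piFinTwo fun _ => ℝ).comp
      (EuclideanSpace.volume_preserving_symm_measurableEquiv_toLp (Fin 2))
  have : ⇑(shearCoord n s) =
      planeMap (n 0) (n 1) (-n 1 - s * n 0) (n 0 - s * n 1) ∘ fun x : V2 => (x 0, x 1) := by
    funext x
    simp only [shearCoord_apply, inner_V2, cross, Function.comp_apply, planeMap_apply]
    congr 1
    ring
  rw [this]
  exact (measurePreserving_planeMap (by linear_combination hn)).comp hcoords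

theorem inner_eq_shearCoord {n : V2} (hn : n 0 ^ 2 + n 1 ^ 2 = 1) (s : ℝ) (v x : V2) :
    ⟪v, x⟫ =
      (⟪n, v⟫ + s * cross n v) * (shearCoord n s x).1 + cross n v * (shearCoord n s x).2 := by
  simp only [shearCoord_apply, inner_V2, cross]
  linear_combination -(v 0 * x 0 + v 1 * x 1) * hn

section Polyhedron

variable {m : ℕ} {u : Fin m → V2} {b : Fin m → ℝ}

def faceCone (u : Fin m → V2) (b : Fin m → ℝ) (i : Fin m) : Set V2 :=
  convexHull ℝ (insert 0 (faceF u b i))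

theorem convex_polyP : Convex ℝ (polyP u b) := by
  have : polyP u b = ⋂ k, {x | ⟪u k, x⟫ ≤ b k} := by
    ext
    simp [polyP]
  rw [this]
  exact convex_iInter fun k => convex_halfSpace_le (innerₛₗ ℝ (u k)).isLinear (b k)

theorem convex_faceF (i : Fin m) : Convex ℝ (faceF u b i) :=
  convex_polyP.inter (convex_hyperplane (innerₛₗ ℝ (u i)).isLinear (b i))

theorem faceCone_subset_polyP (hb : ∀ k, 0 ≤ b k) (i : Fin m) : faceCone u b i ⊆ polyP u b :=
  convexHull_min (insert_subset_iff.2 ⟨fun k => by simpa using hb k, fun _ hx => hx.1⟩)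
    convex_polyP

theorem volume_faceCone_eq_zero {i : Fin m} (hu : u i ≠ 0) (hbi : b i = 0) :
    volume (faceCone u b i) = 0 := by
  refine measure_mono_null (t := LinearMap.ker (innerₛₗ ℝ (u i))) ?_
    (Measure.addHaar_submodule _ _ fun h => hu ?_)
  · refine convexHull_min (insert_subset_iff.2 ⟨zero_mem _, fun x hx => ?_⟩) (Submodule.convex _)
    simpa [hbi] using hx.2
  · simpa using LinearMap.congr_fun (LinearMap.ker_eq_top.1 h) (u i)

theorem faceCone_subset_inter_halfPlane {i j : Fin m} (hj : u j = -u i) (hb : ∀ k, 0 ≤ b k) :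
    faceCone u b j ⊆ polyP u b ∩ {x | ⟪u i, x⟫ ≤ 0} := by
  refine subset_inter (faceCone_subset_polyP hb j) (convexHull_min
    (insert_subset_iff.2 ⟨by simp, fun x hx => ?_⟩)
    (convex_halfSpace_le (innerₛₗ ℝ (u i)).isLinear 0))
  have := hx.2
  rw [hj, inner_neg_left] at this
  simp only [mem_ofPred_eq]
  linarith [hb j]

theorem faceCone_subset_preimage_triangle {i : Fin m} (Φ : V2 →ₗ[ℝ] ℝ × ℝ)
    (hΦ : ∀ x, (Φ x).1 = ⟪u i, x⟫) {c d : ℝ} (hcd : c ≤ d)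
    (hface : (fun x => (Φ x).2) '' faceF u b i ⊆ Icc c d) :
    faceCone u b i ⊆ Φ ⁻¹' convexHull ℝ {0, (b i, c), (b i, d)} := by
  refine convexHull_min (insert_subset_iff.2 ⟨by simp [subset_convexHull ℝ _ (mem_insert _ _)],
    fun x hx => ?_⟩) ((convex_convexHull ℝ _).linear_preimage Φ)
  have hΦx : Φ x = (b i, (Φ x).2) := Prod.ext ((hΦ x).trans hx.2) rfl
  have hseg : Φ x ∈ segment ℝ (b i, c) (b i, d) := by
    rw [hΦx, ← Prod.image_mk_segment_right, segment_eq_Icc hcd]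
    exact mem_image_of_mem _ (hface (mem_image_of_mem _ hx))
  exact segment_subset_convexHull (by simp) (by simp) hseg

theorem mem_polyP_of_shearCoord {i : Fin m} (hn : u i 0 ^ 2 + u i 1 ^ 2 = 1) {s : ℝ}
    (hs : ∀ k, cross (u i) (u k) ≠ 0 → 0 ≤ ⟪u i, u k⟫ + s * cross (u i) (u k))
    (hb : ∀ k, 0 ≤ b k) {x x' : V2} (hx' : x' ∈ faceF u b i) (ht₀ : 0 ≤ ⟪u i, x⟫)
    (ht : ⟪u i, x⟫ ≤ b i) (hz : (shearCoord (u i) s x).2 = (shearCoord (u i) s x').2) :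
    x ∈ polyP u b := by
  intro k
  have hk := hx'.1 k
  rw [inner_eq_shearCoord hn s, shearCoord_fst, hx'.2, ← hz] at hk
  rw [inner_eq_shearCoord hn s, shearCoord_fst]
  by_cases hc : 0 ≤ ⟪u i, u k⟫ + s * cross (u i) (u k)
  · nlinarith [mul_le_mul_of_nonneg_left ht hc]
  · have hβ : cross (u i) (u k) = 0 := by_contra fun h => hc (hs k h)
    rw [hβ] at hc ⊢
    nlinarith [hb k]

theorem two_mul_volume_faceCone_le {i : Fin m} (hn : u i 0 ^ 2 + u i 1 ^ 2 = 1)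
    (hi : i ∈ SqIdx u) (hb : ∀ k, 0 ≤ b k) (hbi : 0 < b i) (hP : volume (polyP u b) ≠ ⊤) :
    2 * volume (faceCone u b i) ≤ volume (polyP u b \ {x | ⟪u i, x⟫ ≤ 0}) := by
  obtain ⟨s, hs⟩ := exists_add_mul_nonneg (fun k => ⟪u i, u k⟫) (fun k => cross (u i) (u k))
    fun k l hk hl => by
      rw [← cross_eq_inner_mul_cross_sub (u i) hn]
      exact cross_nonpos_of_mem_SqIdx hi hk hl
  set Φ := shearCoord (u i) s
  have hΦ := measurePreserving_shearCoord hn s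
  set I := (fun x => (Φ x).2) '' faceF u b i
  have hI : I.OrdConnected :=
    ((convex_faceF i).linear_image (LinearMap.snd ℝ ℝ ℝ ∘ₗ Φ)).ordConnected
  set box := Φ ⁻¹' (Ioc 0 (b i) ×ˢ I)
  have hbox : box ⊆ polyP u b \ {x | ⟪u i, x⟫ ≤ 0} := by
    rintro x ⟨⟨ht₀, ht⟩, x', hx', hz⟩
    exact ⟨mem_polyP_of_shearCoord hn hs hb hx' ht₀.le ht hz.symm, not_le.2 ht₀⟩
  have hvolbox : volume box = ENNReal.ofReal (b i) * volume I := by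
    rw [hΦ.measure_preimage (measurableSet_Ioc.prod hI.measurableSet).nullMeasurableSet,
      Measure.volume_eq_prod, Measure.prod_prod, Real.volume_Ioc, sub_zero]
  have hIfin : volume I ≠ ⊤ := fun h => hP <| top_unique <| by
    rw [← ENNReal.mul_top (ENNReal.ofReal_pos.2 hbi).ne', ← h, ← hvolbox]
    exact measure_mono (hbox.trans sdiff_subset)
  obtain ⟨c, d, hcd, hIcd, hlen⟩ := hI.exists_subset_Icc hIfin
  calc 2 * volume (faceCone u b i)
      ≤ 2 * volume (convexHull ℝ {(0 : ℝ × ℝ), (b i, c), (b i, d)}) := by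
        rw [← hΦ.measure_preimage ((convex_convexHull ℝ _).nullMeasurableSet _)]
        gcongr
        exact faceCone_subset_preimage_triangle Φ (shearCoord_fst _ _) hcd hIcd
    _ ≤ ENNReal.ofReal |b i * d - b i * c| := two_mul_volume_triangle_le _ _ _
    _ = ENNReal.ofReal (b i) * ENNReal.ofReal (d - c) := by
        rw [← mul_sub, abs_of_nonneg (mul_nonneg hbi.le (sub_nonneg.2 hcd)),
          ENNReal.ofReal_mul hbi.le]
    _ ≤ volume box := by rw [hvolbox]; gcongr
    _ ≤ volume (polyP u b \ {x | ⟪u i, x⟫ ≤ 0}) := measure_mono hbox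

theorem two_mul_volume_faceCone_add_le {i j : Fin m} (hn : ‖u i‖ = 1) (hi : i ∈ SqIdx u)
    (hj : u j = -u i) (hb : ∀ k, 0 ≤ b k) (hP : volume (polyP u b) ≠ ⊤) :
    2 * volume (faceCone u b i) + volume (faceCone u b j) ≤ volume (polyP u b) := by
  have hn' : u i 0 ^ 2 + u i 1 ^ 2 = 1 := by
    have := real_inner_self_eq_norm_sq (u i)
    rw [inner_V2, hn] at this
    linear_combination this
  have hH : MeasurableSet {x : V2 | ⟪u i, x⟫ ≤ 0} := measurableSet_le (by fun_prop) measurable_const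
  rw [← measure_sdiff_add_inter (polyP u b) hH]
  refine add_le_add ?_ (measure_mono (faceCone_subset_inter_halfPlane hj hb))
  rcases (hb i).eq_or_lt with hbi | hbi
  · rw [volume_faceCone_eq_zero (fun h => by simp [h] at hn') hbi.symm, mul_zero]
    exact zero_le
  · exact two_mul_volume_faceCone_le hn' hi hb hbi hP

end Polyhedron

theorem stmt12_general (m : ℕ) (u : Fin m → V2)
    (hunit : ∀ k, ‖u k‖ = 1)
    (i j : Fin m) (hi : i ∈ SqIdx u) (hj : u j = -u i) :
    ∀ γ ∈ Ccv u, γ i + (1 / 2) * γ j ≤ 1 / 2 := by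
  rintro γ ⟨b, hb, hvol, rfl⟩
  have hP : volume (polyP u b) = 1 := (ENNReal.toReal_eq_one_iff _).1 hvol
  have key := two_mul_volume_faceCone_add_le (hunit i) hi hj hb (by simp [hP])
  have hfin : ∀ k, volume (faceCone u b k) ≠ ⊤ := fun k =>
    ne_top_of_le_ne_top (by simp [hP]) (measure_mono (faceCone_subset_polyP hb k))
  rw [hP] at key
  have hreal := ENNReal.toReal_mono ENNReal.one_ne_top key
  rw [ENNReal.toReal_add (ENNReal.mul_ne_top ENNReal.ofNat_ne_top (hfin i)) (hfin j),
    ENNReal.toReal_mul] at hreal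
  change (volume (faceCone u b i)).toReal + 1 / 2 * (volume (faceCone u b j)).toReal ≤ 1 / 2
  norm_num at hreal
  linarith

/-- If `uᵢ ∈ U_□` and `uⱼ = -uᵢ`, then every cone-volume vector `γ ∈ C_cv(U)`
satisfies `γᵢ + (1/2)γⱼ ≤ 1/2`. -/
theorem stmt12 (m : ℕ) (u : Fin m → V2)
    (hunit : ∀ k, ‖u k‖ = 1) (hinj : Function.Injective u)
    (hpos : pos (Set.range u) = Set.univ)
    (i j : Fin m) (hi : i ∈ SqIdx u) (hj : u j = -u i) :
    ∀ γ ∈ Ccv u, γ i + (1 / 2) * γ j ≤ 1 / 2 :=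
  stmt12_general m u hunit i j hi hj
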